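/- arXiv:2205.01739 — 2 statements merged into one kernel-verified Lean document; each statement's English description precedes it below -/
import Mathlib

section
/- Let P, N₀ > 0, M ≥ 2, and K ≥ 2. Define the linear-graph sum-rate C_LG = log₂(1 + P·M^{2K}/N₀) + K(M−1)·log₂(1 + P·M²/N₀) and the null-graph sum-rate C_NG = K·M·log₂(1 + P·M²/N₀). Then there exists ρ₀ > 0 such that for all SNR ρ = P/N₀ < ρ₀ we have C_LG > C_NG, and there exists ρ₁ such that for all ρ > ρ₁ we have C_NG > C_LG. -/
open Real

lemma natkey : ∀ K : ℕ, 2 ≤ K → 2 * K ≤ 4 ^ (K - 1) := by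
  intro K hK
  induction K with
  | zero => omega
  | succ n ih =>
    rcases Nat.lt_or_ge n 2 with h | h
    · interval_cases n <;> simp_all <;> omega
    · have := ih h
      have h4 : 4 ^ (n - 1) * 4 = 4 ^ n := by
        rw [← pow_succ]
        congr 1
        omega
      have : n + 1 - 1 = n := by omega
      rw [this]
      omega

lemma keyreal (M K : ℕ) (hM : 2 ≤ M) (hK : 2 ≤ K) :
    2 * (K : ℝ) * (M : ℝ) ^ 2 ≤ (M : ℝ) ^ (2 * K) := by
  have hnat : 2 * K * M ^ 2 ≤ M ^ (2 * K) := by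
    have h1 : 2 * K ≤ 4 ^ (K - 1) := natkey K hK
    have h2 : 4 ^ (K - 1) ≤ M ^ (2 * (K - 1)) := by
      calc 4 ^ (K - 1) = (2 ^ 2) ^ (K - 1) := by norm_num
        _ = 2 ^ (2 * (K - 1)) := by rw [← pow_mul]
        _ ≤ M ^ (2 * (K - 1)) := Nat.pow_le_pow_left hM _
    have h3 : M ^ (2 * (K - 1)) * M ^ 2 = M ^ (2 * K) := by
      rw [← pow_add]
      congr 1
      omega
    calc 2 * K * M ^ 2 ≤ M ^ (2 * (K - 1)) * M ^ 2 :=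
          Nat.mul_le_mul_right _ (le_trans h1 h2)
      _ = M ^ (2 * K) := h3
  have := Nat.cast_le (α := ℝ).mpr hnat
  push_cast at this
  linarith

set_option maxHeartbeats 1000000 in
/-- Low-SNR vs high-SNR comparison of the linear-graph and null-graph IRS network sum-rate
upper bounds: at low SNR the linear graph wins, at high SNR the null graph wins. -/
theorem stmt12 (P N₀ : ℝ) (hP : 0 < P) (hN₀ : 0 < N₀) (M K : ℕ) (hM : 2 ≤ M) (hK : 2 ≤ K) :
    (∃ ρ₀ : ℝ, 0 < ρ₀ ∧ ∀ ρ : ℝ, 0 < ρ → ρ < ρ₀ →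
      Real.logb 2 (1 + ρ * (M : ℝ) ^ (2 * K)) +
          (K : ℝ) * ((M : ℝ) - 1) * Real.logb 2 (1 + ρ * (M : ℝ) ^ 2)
        > (K : ℝ) * (M : ℝ) * Real.logb 2 (1 + ρ * (M : ℝ) ^ 2)) ∧
    (∃ ρ₁ : ℝ, ∀ ρ : ℝ, ρ₁ < ρ →
      (K : ℝ) * (M : ℝ) * Real.logb 2 (1 + ρ * (M : ℝ) ^ 2)
        > Real.logb 2 (1 + ρ * (M : ℝ) ^ (2 * K)) +
          (K : ℝ) * ((M : ℝ) - 1) * Real.logb 2 (1 + ρ * (M : ℝ) ^ 2)) := by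
  have hMr : (2 : ℝ) ≤ (M : ℝ) := by exact_mod_cast hM
  have hKr : (2 : ℝ) ≤ (K : ℝ) := by exact_mod_cast hK
  have hMpos : (0 : ℝ) < (M : ℝ) := by linarith
  have hM2pos : (0 : ℝ) < (M : ℝ) ^ 2 := by positivity
  have hM2Kpos : (0 : ℝ) < (M : ℝ) ^ (2 * K) := by positivity
  have hKpos : (0 : ℝ) < (K : ℝ) := by linarith
  have hkey := keyreal M K hM hK
  constructor
  · refine ⟨1 / (4 * K * (M : ℝ) ^ 2), by positivity, fun ρ hρ hρ' => ?_⟩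
    set x := ρ * (M : ℝ) ^ 2 with hxdef
    have hxpos : 0 < x := by positivity
    have hKx : (K : ℝ) * x < 1 / 4 := by
      have h' : ρ * (4 * (K : ℝ) * (M : ℝ) ^ 2) < 1 :=
        (lt_div_iff₀ (by positivity)).mp hρ'
      nlinarith
    have hx1 : x < 1 := by nlinarith
    -- (1 - x)^K ≥ 1 - K x
    have h1 : 1 - (K : ℝ) * x ≤ (1 - x) ^ K := by
      have := one_add_mul_le_pow (a := -x) (by linarith : (-2 : ℝ) ≤ -x) K
      calc 1 - (K : ℝ) * x = 1 + (K : ℝ) * (-x) := by ring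
        _ ≤ (1 + -x) ^ K := this
        _ = (1 - x) ^ K := by ring_nf
    -- (1+x)^K (1-x)^K ≤ 1
    have h2 : (1 + x) ^ K * (1 - x) ^ K ≤ 1 := by
      rw [← mul_pow]
      have h0 : 0 ≤ (1 + x) * (1 - x) := by nlinarith
      have h1' : (1 + x) * (1 - x) ≤ 1 := by nlinarith
      calc ((1 + x) * (1 - x)) ^ K ≤ 1 ^ K := pow_le_pow_left₀ h0 h1' K
        _ = 1 := one_pow K
    have hpowpos : (0 : ℝ) < (1 + x) ^ K := by positivity
    have h3 : (1 + x) ^ K * (1 - (K : ℝ) * x) ≤ 1 := by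
      calc (1 + x) ^ K * (1 - (K : ℝ) * x) ≤ (1 + x) ^ K * (1 - x) ^ K :=
            mul_le_mul_of_nonneg_left h1 (le_of_lt hpowpos)
        _ ≤ 1 := h2
    -- 1 < (1 + ρ M^{2K})(1 - K x)
    have hKx2 : 2 * ((K : ℝ) * x) ≤ ρ * (M : ℝ) ^ (2 * K) := by
      rw [hxdef]; nlinarith
    have h4 : 1 < (1 + ρ * (M : ℝ) ^ (2 * K)) * (1 - (K : ℝ) * x) := by
      have hterm : (K : ℝ) * x * (ρ * (M : ℝ) ^ (2 * K)) <
          ρ * (M : ℝ) ^ (2 * K) / 4 := by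
        have hpos : 0 < ρ * (M : ℝ) ^ (2 * K) := by positivity
        nlinarith
      nlinarith [hKx2]
    have hmain : (1 + x) ^ K < 1 + ρ * (M : ℝ) ^ (2 * K) := by
      have hc : (0 : ℝ) < 1 - (K : ℝ) * x := by linarith
      have := lt_of_le_of_lt h3 h4
      exact lt_of_mul_lt_mul_right (by linarith [this]) (le_of_lt hc)
    -- translate to logb
    have hL : Real.logb 2 (1 + ρ * (M : ℝ) ^ (2 * K)) >
        (K : ℝ) * Real.logb 2 (1 + x) := by
      have := Real.logb_lt_logb (by norm_num : (1:ℝ) < 2) (by positivity) hmain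
      rwa [Real.logb_pow] at this
    have hring : (K : ℝ) * (M : ℝ) * Real.logb 2 (1 + x) =
        (K : ℝ) * ((M : ℝ) - 1) * Real.logb 2 (1 + x) +
        (K : ℝ) * Real.logb 2 (1 + x) := by ring
    linarith
  · refine ⟨2, fun ρ hρ => ?_⟩
    have hρ1 : (1 : ℝ) ≤ ρ := by linarith
    set x := ρ * (M : ℝ) ^ 2 with hxdef
    have hxpos : 0 < x := by positivity
    -- (1+x)^K > 1 + ρ M^{2K}
    have hpowK : (ρ * (M : ℝ) ^ 2) ^ K = ρ ^ K * (M : ℝ) ^ (2 * K) := by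
      rw [mul_pow, ← pow_mul]
    have hρK : 2 * ρ ≤ ρ ^ K := by
      have h2 : ρ ^ 2 ≤ ρ ^ K := pow_le_pow_right₀ hρ1 hK
      have h3 : 2 * ρ ≤ ρ ^ 2 := by nlinarith
      linarith
    have hmain : 1 + ρ * (M : ℝ) ^ (2 * K) < (1 + x) ^ K := by
      have h1 : x ^ K < (1 + x) ^ K := by
        apply pow_lt_pow_left₀ (by linarith) (le_of_lt hxpos)
        omega
      have h2 : 2 * ρ * (M : ℝ) ^ (2 * K) ≤ x ^ K := by
        rw [hxdef, hpowK]
        exact mul_le_mul_of_nonneg_right hρK (le_of_lt hM2Kpos)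
      have hMK1 : (1 : ℝ) ≤ (M : ℝ) ^ (2 * K) := one_le_pow₀ (by linarith)
      have h3 : (1 : ℝ) < ρ * (M : ℝ) ^ (2 * K) := by nlinarith
      linarith
    have hL : Real.logb 2 (1 + ρ * (M : ℝ) ^ (2 * K)) <
        (K : ℝ) * Real.logb 2 (1 + x) := by
      have := Real.logb_lt_logb (by norm_num : (1:ℝ) < 2) (by positivity) hmain
      rwa [Real.logb_pow] at this
    have hring : (K : ℝ) * (M : ℝ) * Real.logb 2 (1 + x) =
        (K : ℝ) * ((M : ℝ) - 1) * Real.logb 2 (1 + x) +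
        (K : ℝ) * Real.logb 2 (1 + x) := by ring
    linarith
end

section
/- Let f(γ) = N_γ·log₂(1 + ρ·M^{2γ}) where N_γ = K(K−1)/(2(γ−1)) for integer γ ≥ 2 dividing appropriately, ρ > 0, M ≥ 2, K ≥ 2. Then for ρ ≥ 1, f is maximized over admissible γ at the smallest admissible γ, i.e., γ = 2: formally, for all admissible γ ≥ 2, N_2·log₂(1 + ρ·M⁴) ≥ N_γ·log₂(1 + ρ·M^{2γ}) whenever ρ·M⁴ ≥ (ρ·M^{2γ})^{1/(γ−1)} — in particular whenever ρ ≥ 1. -/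
lemma aux_one_add_pow (x : ℝ) (hx : 1 ≤ x) (n : ℕ) (hn : 1 ≤ n) :
    1 + x ^ n ≤ (1 + x) ^ n := by
  induction n with
  | zero => omega
  | succ m ih =>
    rcases Nat.eq_or_lt_of_le hn with h | h
    · simp [← h]
    · have hm : 1 ≤ m := by omega
      have h1 := ih hm
      have hx0 : (0:ℝ) ≤ x := by linarith
      calc 1 + x ^ (m+1) = 1 + x * x ^ m := by ring
        _ ≤ (1 + x ^ m) * (1 + x) := by nlinarith [pow_nonneg hx0 m]
        _ ≤ (1 + x) ^ m * (1 + x) := by nlinarith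
        _ = (1 + x) ^ (m+1) := by ring

/-- At high SNR (`ρ ≥ 1`), decomposing the complete-graph IRS network into the shortest
admissible paths (`γ = 2`) maximizes the sum-rate bound `N_γ log₂(1 + ρ M^{2γ})`, where
`N_γ = K(K−1)/(2(γ−1))`. -/
theorem stmt19 (K M γ : ℕ) (hK : 2 ≤ K) (hM : 2 ≤ M) (hγ : 2 ≤ γ) (ρ : ℝ) (hρ : 1 ≤ ρ) :
    ((K : ℝ) * ((K : ℝ) - 1) / 2) * Real.logb 2 (1 + ρ * (M : ℝ) ^ 4)
      ≥ ((K : ℝ) * ((K : ℝ) - 1) / (2 * ((γ : ℝ) - 1)))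
          * Real.logb 2 (1 + ρ * (M : ℝ) ^ (2 * γ)) := by
  have hM1 : (1:ℝ) ≤ (M:ℝ) := by exact_mod_cast Nat.one_le_of_lt hM
  have hx : (1:ℝ) ≤ ρ * (M:ℝ) ^ 4 := by
    have : (1:ℝ) ≤ (M:ℝ) ^ 4 := one_le_pow₀ hM1
    nlinarith
  set n := γ - 1 with hn
  have hn1 : 1 ≤ n := by omega
  have hγn : γ = n + 1 := by omega
  -- key inequality: 1 + ρ M^(2γ) ≤ (1 + ρ M^4)^n
  have key : 1 + ρ * (M:ℝ) ^ (2*γ) ≤ (1 + ρ * (M:ℝ) ^ 4) ^ n := by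
    have h1 : ρ * (M:ℝ) ^ (2*γ) ≤ (ρ * (M:ℝ) ^ 4) ^ n := by
      have hρn : ρ ≤ ρ ^ n := le_self_pow₀ (by linarith) (by omega)
      have hMn : (M:ℝ) ^ (2*γ) ≤ (M:ℝ) ^ (4*n) :=
        pow_le_pow_right₀ hM1 (by omega)
      calc ρ * (M:ℝ) ^ (2*γ) ≤ ρ ^ n * (M:ℝ) ^ (4*n) := by
            have hρ0 : (0:ℝ) ≤ ρ := by linarith
            have : (0:ℝ) ≤ (M:ℝ) ^ (2*γ) := pow_nonneg (by linarith) _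
            nlinarith [pow_nonneg hρ0 n]
        _ = (ρ * (M:ℝ) ^ 4) ^ n := by rw [mul_pow, ← pow_mul]
    have h2 := aux_one_add_pow (ρ * (M:ℝ) ^ 4) hx n hn1
    linarith
  have hb1 : (1:ℝ) < 2 := one_lt_two
  have hpos : (0:ℝ) < 1 + ρ * (M:ℝ) ^ (2*γ) := by
    have : (0:ℝ) ≤ ρ * (M:ℝ) ^ (2*γ) := by positivity
    linarith
  have hlog : Real.logb 2 (1 + ρ * (M:ℝ) ^ (2*γ))
      ≤ (n:ℝ) * Real.logb 2 (1 + ρ * (M:ℝ) ^ 4) := by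
    calc Real.logb 2 (1 + ρ * (M:ℝ) ^ (2*γ))
        ≤ Real.logb 2 ((1 + ρ * (M:ℝ) ^ 4) ^ n) :=
          Real.logb_le_logb_of_le (by norm_num) hpos key
      _ = (n:ℝ) * Real.logb 2 (1 + ρ * (M:ℝ) ^ 4) := Real.logb_pow _ _ _
  have hlog0 : 0 ≤ Real.logb 2 (1 + ρ * (M:ℝ) ^ 4) := by
    apply Real.logb_nonneg hb1; linarith
  have hlogγ0 : 0 ≤ Real.logb 2 (1 + ρ * (M:ℝ) ^ (2*γ)) := by
    apply Real.logb_nonneg hb1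
    have : (1:ℝ) ≤ (M:ℝ) ^ (2*γ) := one_le_pow₀ hM1
    nlinarith
  have hKpos : (0:ℝ) ≤ (K:ℝ) * ((K:ℝ) - 1) := by
    have : (2:ℝ) ≤ (K:ℝ) := by exact_mod_cast hK
    nlinarith
  have hγr : ((γ:ℝ) - 1) = (n:ℝ) := by
    rw [hγn]; push_cast; ring
  rw [ge_iff_le, hγr, div_mul_eq_mul_div, div_le_iff₀ (by positivity), div_mul_eq_mul_div,
    div_mul_eq_mul_div, le_div_iff₀ (by norm_num : (0:ℝ) < 2)]
  have hnp : (0:ℝ) < (n:ℝ) := by exact_mod_cast hn1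
  calc (K:ℝ) * ((K:ℝ) - 1) * Real.logb 2 (1 + ρ * (M:ℝ) ^ (2*γ)) * 2
      ≤ (K:ℝ) * ((K:ℝ) - 1) * ((n:ℝ) * Real.logb 2 (1 + ρ * (M:ℝ) ^ 4)) * 2 := by
        nlinarith
    _ = (K:ℝ) * ((K:ℝ) - 1) * Real.logb 2 (1 + ρ * (M:ℝ) ^ 4) * (2 * (n:ℝ)) := by ring
end
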